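/- Let (Xᵢ)_{i≥1} be identically distributed random vectors in ℝ^d whose norm ‖X₁‖ (Euclidean norm) has a regularly varying tail of index −α with α ∈ (0,1), and let (aₙ) be positive reals with n·P(‖X₁‖ > aₙ) → 1 as n → ∞. For u > 0 and δ > 0 set I(u,n) = P( max_{1≤k≤n} ‖ ( Σ_{i=1}^k ( (Xᵢʲ/aₙ)·1{|Xᵢʲ| ≤ u·aₙ} − E[(X₁ʲ/aₙ)·1{|X₁ʲ| ≤ u·aₙ}] ) )_{j=1,…,d} ‖ > δ ). Then limsup_{n→∞} I(u,n) ≤ 2d·δ^{−1}·u^{1−α}·(1 + α/(1−α)). -/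

import Mathlib

/-!
Bounding the Euclidean norm by the sum of the absolute values of the coordinates, the maximum
over `k ≤ n` by the sum over `i ≤ n`, and `E|T - E T|` by `2 E|T|`, Markov's inequality and the
identical distribution of the `Xᵢ` give `I(u,n) ≤ 2 d n / (δ aₙ) · E[min(‖X₁‖, u aₙ)]`, and
`E[min(‖X₁‖, t)] = ∫₀ᵗ F` for the tail `F(s) = P(‖X₁‖ > s)`.

For `λ > 1` and `α < β < 1`, regular variation makes `F(x) ≤ λ^β F(λx)` for large `x`; iterating
gives Potter's bound `s^β F(s) ≤ λ^β t^β F(t)` for `x₀ ≤ s ≤ t`, and integrating `s^(-β)` gives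
Karamata's estimate `∫₀ᵗ F ≤ x₀ F(0) + λ^β / (1 - β) · t F(t)`. As `n F(u aₙ) → u^(-α)` and
`n / aₙ → 0` (since `t F(t) → ∞`), the limsup is at most `2 d δ⁻¹ λ^β u^(1-α) / (1 - β)`;
letting `λ → 1` and `β → α` yields `1 / (1 - α) = 1 + α / (1 - α)`.
-/

open MeasureTheory Filter Set Topology

section Truncation

variable {Ω ι : Type*} [MeasurableSpace Ω] {μ : Measure Ω} [Fintype ι]

lemma EuclideanSpace.norm_le_sum_abs (v : EuclideanSpace ℝ ι) :
    ‖v‖ ≤ ∑ j, |v j| := by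
  have := Finset.sum_sq_le_sq_sum_of_nonneg (s := Finset.univ) fun j _ => abs_nonneg (v j)
  rw [EuclideanSpace.norm_eq, Real.sqrt_le_iff]
  simp only [Real.norm_eq_abs, sq_abs] at this ⊢
  exact ⟨by positivity, this⟩

lemma norm_partialSum_le_sum_sum_abs (y : ℕ → ι → ℝ) {k n : ℕ}
    (hkn : k ≤ n) :
    ‖(WithLp.equiv 2 (ι → ℝ)).symm (fun j => ∑ i ∈ Finset.Icc 1 k, y i j)‖ ≤
      ∑ j, ∑ i ∈ Finset.Icc 1 n, |y i j| :=
  (EuclideanSpace.norm_le_sum_abs _).trans <| Finset.sum_le_sum fun _ _ =>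
    (Finset.abs_sum_le_sum_abs _ _).trans <|
      Finset.sum_le_sum_of_subset_of_nonneg (Finset.Icc_subset_Icc_right hkn)
        fun _ _ _ => abs_nonneg _

lemma measureReal_exists_norm_partialSum_gt_le [IsFiniteMeasure μ] (Y : ℕ → Ω → ι → ℝ)
    (hY : ∀ i j, Integrable (fun ω => Y i ω j) μ) {δ : ℝ} (hδ : 0 < δ) (n : ℕ) :
    μ.real {ω | ∃ k, 1 ≤ k ∧ k ≤ n ∧
        δ < ‖(WithLp.equiv 2 (ι → ℝ)).symm (fun j => ∑ i ∈ Finset.Icc 1 k, Y i ω j)‖} ≤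
      δ⁻¹ * ∑ j, ∑ i ∈ Finset.Icc 1 n, ∫ ω, |Y i ω j| ∂μ := by
  set Z : Ω → ℝ := fun ω => ∑ j, ∑ i ∈ Finset.Icc 1 n, |Y i ω j|
  have hZ : Integrable Z μ :=
    integrable_finsetSum _ fun j _ => integrable_finsetSum _ fun i _ => (hY i j).abs
  have hsub : {ω | ∃ k, 1 ≤ k ∧ k ≤ n ∧
      δ < ‖(WithLp.equiv 2 (ι → ℝ)).symm (fun j => ∑ i ∈ Finset.Icc 1 k, Y i ω j)‖} ⊆
      {ω | δ ≤ Z ω} := by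
    rintro ω ⟨k, -, hkn, hδk⟩
    exact hδk.le.trans (norm_partialSum_le_sum_sum_abs (fun i j => Y i ω j) hkn)
  have hmarkov := mul_meas_ge_le_integral_of_nonneg
    (.of_forall fun ω => by positivity : 0 ≤ᵐ[μ] Z) hZ δ
  rw [integral_finsetSum _ fun j _ => integrable_finsetSum _ fun i _ => (hY i j).abs] at hmarkov
  simp_rw [integral_finsetSum _ fun i _ => (hY i _).abs] at hmarkov
  rw [le_inv_mul_iff₀ hδ]
  exact (mul_le_mul_of_nonneg_left (measureReal_mono hsub) hδ.le).trans hmarkov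

lemma integral_abs_sub_integral_le [IsProbabilityMeasure μ] {T : Ω → ℝ} (hT : Integrable T μ) :
    ∫ ω, |T ω - ∫ ω', T ω' ∂μ| ∂μ ≤ 2 * ∫ ω, |T ω| ∂μ := by
  calc ∫ ω, |T ω - ∫ ω', T ω' ∂μ| ∂μ ≤ ∫ ω, (|T ω| + |∫ ω', T ω' ∂μ|) ∂μ :=
        integral_mono (hT.sub (integrable_const _)).abs (hT.abs.add (integrable_const _))
          fun ω => abs_sub _ _
    _ = ∫ ω, |T ω| ∂μ + |∫ ω', T ω' ∂μ| := by
        rw [integral_add hT.abs (integrable_const _), integral_const, probReal_univ, one_smul]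
    _ ≤ 2 * ∫ ω, |T ω| ∂μ := by
        linarith [abs_integral_le_integral_abs (f := T) (μ := μ)]

lemma integral_min_eq_intervalIntegral_measureReal [IsFiniteMeasure μ] {Y : Ω → ℝ}
    (hY : Measurable Y) (hY0 : 0 ≤ Y) {t : ℝ} (ht : 0 ≤ t) :
    ∫ ω, min (Y ω) t ∂μ = ∫ s in 0..t, μ.real {ω | s < Y ω} := by
  have hint : Integrable (fun ω => min (Y ω) t) μ :=
    Integrable.of_bound (hY.min measurable_const).aestronglyMeasurable t <| .of_forall fun ω => by
      rw [Real.norm_of_nonneg (le_min (hY0 ω) ht)]; exact min_le_right _ _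
  rw [hint.integral_eq_integral_meas_lt (.of_forall fun ω => le_min (hY0 ω) ht),
    intervalIntegral.integral_of_le ht, integral_Ioc_eq_integral_Ioo,
    setIntegral_eq_of_subset_of_forall_sdiff_eq_zero measurableSet_Ioi Ioo_subset_Ioi_self]
  · refine setIntegral_congr_fun measurableSet_Ioo fun s hs => ?_
    simp only [lt_min_iff, hs.2, and_true]
  · rintro s ⟨hs0, hst⟩
    have hts : t ≤ s := by simpa [mem_Ioi.1 hs0] using hst
    simp [not_lt.2 hts]

noncomputable def truncScaled (t c x : ℝ) : ℝ := if |x| ≤ t then x / c else 0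

@[fun_prop]
lemma measurable_truncScaled (t c : ℝ) : Measurable (truncScaled t c) :=
  Measurable.ite (measurableSet_le measurable_abs measurable_const) (measurable_div_const c)
    measurable_const

lemma abs_truncScaled_le {t c : ℝ} (ht : 0 ≤ t) (hc : 0 < c) (x : ℝ) :
    |truncScaled t c x| ≤ min |x| t / c := by
  unfold truncScaled
  split_ifs with hx
  · rw [abs_div, abs_of_pos hc, min_eq_left hx]
  · rw [abs_zero]; positivity

lemma integrable_truncScaled_comp [IsFiniteMeasure μ] {f : Ω → ℝ} (hf : Measurable f)
    {t c : ℝ} (ht : 0 ≤ t) (hc : 0 < c) :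
    Integrable (fun ω => truncScaled t c (f ω)) μ :=
  Integrable.of_bound ((measurable_truncScaled t c).comp hf).aestronglyMeasurable (t / c)
    (.of_forall fun ω => (abs_truncScaled_le ht hc _).trans (by gcongr; exact min_le_right _ _))

lemma integral_abs_truncScaled_apply_le [IsFiniteMeasure μ] {X : Ω → EuclideanSpace ℝ ι}
    (hX : Measurable X) {t c : ℝ} (ht : 0 ≤ t) (hc : 0 < c) (j : ι) :
    ∫ ω, |truncScaled t c (X ω j)| ∂μ ≤ (∫ s in 0..t, μ.real {ω | s < ‖X ω‖}) / c := by
  have hmin : Integrable (fun ω => min ‖X ω‖ t) μ :=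
    Integrable.of_bound (by fun_prop) t (.of_forall fun ω => by
      rw [Real.norm_of_nonneg (by positivity)]; exact min_le_right _ _)
  calc ∫ ω, |truncScaled t c (X ω j)| ∂μ ≤ ∫ ω, min ‖X ω‖ t / c ∂μ := by
        refine integral_mono ?_ (hmin.div_const c) fun ω =>
          (abs_truncScaled_le ht hc _).trans (by gcongr; exact PiLp.norm_apply_le (X ω) j)
        exact (integrable_truncScaled_comp (by fun_prop) ht hc).abs
    _ = (∫ s in 0..t, μ.real {ω | s < ‖X ω‖}) / c := by
        rw [integral_div, integral_min_eq_intervalIntegral_measureReal hX.norm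
          (fun ω => norm_nonneg _) ht]

lemma measureReal_exists_norm_partialSum_truncScaled_gt_le [IsProbabilityMeasure μ]
    (X : ℕ → Ω → EuclideanSpace ℝ ι) (hmeas : ∀ i, Measurable (X i))
    (hident : ∀ i, 1 ≤ i → Measure.map (X i) μ = Measure.map (X 1) μ)
    {t c δ : ℝ} (ht : 0 ≤ t) (hc : 0 < c) (hδ : 0 < δ) (n : ℕ) :
    μ.real {ω | ∃ k, 1 ≤ k ∧ k ≤ n ∧ δ < ‖(WithLp.equiv 2 (ι → ℝ)).symm (fun j =>
        ∑ i ∈ Finset.Icc 1 k,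
          (truncScaled t c (X i ω j) - ∫ ω', truncScaled t c (X 1 ω' j) ∂μ))‖} ≤
      2 * Fintype.card ι / δ * (n / c * ∫ s in 0..t, μ.real {ω | s < ‖X 1 ω‖}) := by
  set m : ι → ℝ := fun j => ∫ ω, truncScaled t c (X 1 ω j) ∂μ
  set I := ∫ s in 0..t, μ.real {ω | s < ‖X 1 ω‖}
  have hT : ∀ i j, Integrable (fun ω => truncScaled t c (X i ω j)) μ := fun i j =>
    integrable_truncScaled_comp (by fun_prop) ht hc
  have hXi : ∀ i ∈ Finset.Icc 1 n, ∀ j,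
      ∫ ω, |truncScaled t c (X i ω j) - m j| ∂μ ≤ 2 * (I / c) := by
    intro i hi j
    have hid : ProbabilityTheory.IdentDistrib (X i) (X 1) μ μ :=
      ⟨(hmeas i).aemeasurable, (hmeas 1).aemeasurable, hident i (Finset.mem_Icc.1 hi).1⟩
    have hcomp : ∫ ω, |truncScaled t c (X i ω j) - m j| ∂μ =
        ∫ ω, |truncScaled t c (X 1 ω j) - m j| ∂μ :=
      (hid.comp (u := fun v : EuclideanSpace ℝ ι => |truncScaled t c (v j) - m j|)
        (by fun_prop)).integral_eq
    calc ∫ ω, |truncScaled t c (X i ω j) - m j| ∂μ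
        ≤ 2 * ∫ ω, |truncScaled t c (X 1 ω j)| ∂μ :=
          hcomp ▸ integral_abs_sub_integral_le (hT 1 j)
      _ ≤ 2 * (I / c) := by gcongr; exact integral_abs_truncScaled_apply_le (hmeas 1) ht hc j
  refine (measureReal_exists_norm_partialSum_gt_le (fun i ω j => truncScaled t c (X i ω j) - m j)
    (fun i j => (hT i j).sub (integrable_const _)) hδ n).trans ?_
  calc δ⁻¹ * ∑ j, ∑ i ∈ Finset.Icc 1 n, ∫ ω, |truncScaled t c (X i ω j) - m j| ∂μ
      ≤ δ⁻¹ * ∑ _j : ι, ∑ _i ∈ Finset.Icc 1 n, 2 * (I / c) := by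
        gcongr with j _ i hi
        exact hXi i hi j
    _ = 2 * Fintype.card ι / δ * (n / c * I) := by
        simp only [Finset.sum_const, Nat.card_Icc, add_tsub_cancel_right, nsmul_eq_mul,
          Finset.card_univ]
        field_simp

end Truncation

lemma Real.rpow_mul_rpow_one_sub {x : ℝ} (hx : 0 < x) (β : ℝ) : x ^ β * x ^ (1 - β) = x := by
  rw [← Real.rpow_add hx, add_sub_cancel, Real.rpow_one]

-- Equivalently, `x ^ β * F x` does not decrease from `x` to `lam * x` once `x ≥ x₀`.
def PotterStep (F : ℝ → ℝ) (x₀ lam β : ℝ) : Prop := ∀ x, x₀ ≤ x → F x ≤ lam ^ β * F (lam * x)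

section Potter

variable {F : ℝ → ℝ} {x₀ lam β : ℝ}

lemma Antitone.rpow_mul_le_of_potterStep (hF : Antitone F) (hF0 : ∀ x, 0 ≤ F x)
    (hlam : 1 < lam) (hβ : 0 ≤ β) (hx₀ : 0 < x₀)
    (hstep : PotterStep F x₀ lam β) {s t : ℝ} (hs : x₀ ≤ s) (hst : s ≤ t) :
    s ^ β * F s ≤ lam ^ β * (t ^ β * F t) := by
  have hs0 : 0 < s := hx₀.trans_le hs
  have ht0 : 0 < t := hs0.trans_le hst
  have hlam0 : 0 < lam := one_pos.trans hlam
  have hiter : ∀ k : ℕ, s ^ β * F s ≤ (lam ^ k * s) ^ β * F (lam ^ k * s) := by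
    intro k
    induction k with
    | zero => simp
    | succ k ih =>
      have hkx₀ : x₀ ≤ lam ^ k * s :=
        hs.trans (le_mul_of_one_le_left hs0.le (one_le_pow₀ hlam.le))
      calc s ^ β * F s ≤ (lam ^ k * s) ^ β * F (lam ^ k * s) := ih
        _ ≤ (lam ^ k * s) ^ β * (lam ^ β * F (lam * (lam ^ k * s))) := by
          gcongr; exact hstep _ hkx₀
        _ = (lam ^ (k + 1) * s) ^ β * F (lam ^ (k + 1) * s) := by
          rw [pow_succ', mul_assoc lam, Real.mul_rpow hlam0.le (by positivity)]; ring
  -- `k + 1` steps of the iteration overshoot `t`, but by at most a factor `lam`.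
  obtain ⟨k, hk, hk1⟩ := exists_nat_pow_near ((one_le_div hs0).2 hst) hlam
  rw [le_div_iff₀ hs0] at hk
  rw [div_lt_iff₀ hs0] at hk1
  calc s ^ β * F s ≤ (lam ^ (k + 1) * s) ^ β * F (lam ^ (k + 1) * s) := hiter (k + 1)
    _ ≤ (lam * t) ^ β * F t := by
      have hovershoot : lam ^ (k + 1) * s ≤ lam * t := by
        rw [pow_succ', mul_assoc]; gcongr
      exact mul_le_mul (Real.rpow_le_rpow (by positivity) hovershoot hβ) (hF hk1.le) (hF0 _)
        (by positivity)
    _ = lam ^ β * (t ^ β * F t) := by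
      rw [Real.mul_rpow hlam0.le ht0.le]; ring

lemma Antitone.intervalIntegral_le_of_potterStep (hF : Antitone F) (hF0 : ∀ x, 0 ≤ F x)
    (hlam : 1 < lam) (hβ0 : 0 ≤ β) (hβ1 : β < 1) (hx₀ : 0 < x₀)
    (hstep : PotterStep F x₀ lam β) {t : ℝ} (ht : x₀ ≤ t) :
    ∫ s in 0..t, F s ≤ x₀ * F 0 + lam ^ β / (1 - β) * (t * F t) := by
  have ht0 : 0 < t := hx₀.trans_le ht
  set C := lam ^ β * (t ^ β * F t)
  have hC : 0 ≤ C := by have := hF0 t; positivity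
  have hhead : ∫ s in 0..x₀, F s ≤ x₀ * F 0 := by
    simpa using intervalIntegral.integral_mono_on hx₀.le hF.intervalIntegrable
      (intervalIntegrable_const (μ := volume)) fun s hs => hF hs.1
  have htail : ∫ s in x₀..t, F s ≤ C * ((t ^ (1 - β) - x₀ ^ (1 - β)) / (1 - β)) := by
    have hint : ∫ s in x₀..t, C * s ^ (-β) = C * ((t ^ (1 - β) - x₀ ^ (1 - β)) / (1 - β)) := by
      rw [intervalIntegral.integral_const_mul, integral_rpow (.inl (by linarith))]
      ring_nf
    rw [← hint]
    have hrpow : IntervalIntegrable (fun s => s ^ (-β)) volume x₀ t :=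
      intervalIntegral.intervalIntegrable_rpow' (by linarith)
    refine intervalIntegral.integral_mono_on ht hF.intervalIntegrable (hrpow.const_mul C)
      fun s hs => ?_
    have hs0 : 0 < s := hx₀.trans_le hs.1
    have := hF.rpow_mul_le_of_potterStep hF0 hlam hβ0 hx₀ hstep hs.1 hs.2
    rw [Real.rpow_neg hs0.le, ← div_eq_mul_inv, le_div_iff₀ (by positivity), mul_comm]
    exact this
  have hCt : C * t ^ (1 - β) = lam ^ β * (t * F t) := by
    calc C * t ^ (1 - β) = lam ^ β * ((t ^ β * t ^ (1 - β)) * F t) := by ring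
      _ = lam ^ β * (t * F t) := by rw [Real.rpow_mul_rpow_one_sub ht0]
  rw [← intervalIntegral.integral_add_adjacent_intervals (b := x₀) hF.intervalIntegrable
    hF.intervalIntegrable]
  calc (∫ s in 0..x₀, F s) + ∫ s in x₀..t, F s
      ≤ x₀ * F 0 + C * ((t ^ (1 - β) - x₀ ^ (1 - β)) / (1 - β)) := add_le_add hhead htail
    _ ≤ x₀ * F 0 + C * (t ^ (1 - β) / (1 - β)) := by
      have : 0 < 1 - β := by linarith
      gcongr
      exact sub_le_self _ (by positivity)
    _ = x₀ * F 0 + lam ^ β / (1 - β) * (t * F t) := by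
      rw [mul_div_assoc', hCt]; ring

lemma Antitone.tendsto_mul_self_atTop_of_potterStep (hF : Antitone F) (hF0 : ∀ x, 0 ≤ F x)
    (hFx₀ : 0 < F x₀) (hlam : 1 < lam) (hβ0 : 0 ≤ β) (hβ1 : β < 1) (hx₀ : 0 < x₀)
    (hstep : PotterStep F x₀ lam β) :
    Tendsto (fun t => t * F t) atTop atTop := by
  have hc : 0 < x₀ ^ β * F x₀ / lam ^ β := by have := one_pos.trans hlam; positivity
  refine tendsto_atTop_mono' atTop ?_
    ((tendsto_rpow_atTop (by linarith : 0 < 1 - β)).const_mul_atTop hc)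
  filter_upwards [eventually_ge_atTop x₀] with t ht
  have ht0 : 0 < t := hx₀.trans_le ht
  have := hF.rpow_mul_le_of_potterStep hF0 hlam hβ0 hx₀ hstep le_rfl ht
  rw [div_mul_eq_mul_div, div_le_iff₀ (by positivity)]
  calc x₀ ^ β * F x₀ * t ^ (1 - β) ≤ lam ^ β * (t ^ β * F t) * t ^ (1 - β) := by gcongr
    _ = (t ^ β * t ^ (1 - β)) * F t * lam ^ β := by ring
    _ = t * F t * lam ^ β := by rw [Real.rpow_mul_rpow_one_sub ht0]

end Potter

section RegularVariation

variable {F : ℝ → ℝ} {α : ℝ}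

lemma exists_potterStep_of_tendsto_div (hFpos : ∀ x, 0 < x → 0 < F x)
    (hrv : ∀ l : ℝ, 0 < l → Tendsto (fun x => F (l * x) / F x) atTop (𝓝 (l ^ (-α))))
    {lam β : ℝ} (hlam : 1 < lam) (hαβ : α < β) :
    ∃ x₀, 0 < x₀ ∧ PotterStep F x₀ lam β := by
  have hlam0 : 0 < lam := one_pos.trans hlam
  obtain ⟨x₁, hx₁⟩ := eventually_atTop.1 <| (hrv lam hlam0).eventually
    (eventually_gt_nhds (Real.rpow_lt_rpow_of_exponent_lt hlam (neg_lt_neg hαβ)))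
  refine ⟨max x₁ 1, by positivity, fun x hx => ?_⟩
  have hx0 : 0 < x := lt_of_lt_of_le (by positivity) hx
  have hratio := hx₁ x ((le_max_left _ _).trans hx)
  rw [lt_div_iff₀ (hFpos x hx0)] at hratio
  calc F x = lam ^ β * (lam ^ (-β) * F x) := by
        rw [← mul_assoc, ← Real.rpow_add hlam0, add_neg_cancel, Real.rpow_zero, one_mul]
    _ ≤ lam ^ β * F (lam * x) := by gcongr

lemma Antitone.tendsto_atTop_of_tendsto_natCast_mul {a : ℕ → ℝ} (hF : Antitone F)
    (hFpos : ∀ x, 0 < x → 0 < F x) (han : Tendsto (fun n : ℕ => n * F (a n)) atTop (𝓝 1)) :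
    Tendsto a atTop atTop := by
  have hFa : Tendsto (fun n => F (a n)) atTop (𝓝 0) := by
    refine (han.div_atTop tendsto_natCast_atTop_atTop).congr' ?_
    filter_upwards [eventually_ne_atTop 0] with n hn
    field_simp
  refine tendsto_atTop.2 fun b => ?_
  filter_upwards [hFa.eventually_lt_const (hFpos (max b 1) (by positivity))] with n hn
  exact (le_max_left b 1).trans (le_of_not_gt fun hlt => (hn.trans_le (hF hlt.le)).false)

lemma limsup_le_of_potterStep {P a : ℕ → ℝ} {K u L x₀ lam β : ℝ} (hF : Antitone F)
    (hF0 : ∀ x, 0 ≤ F x) (hlam : 1 < lam) (hβ0 : 0 ≤ β) (hβ1 : β < 1) (hx₀ : 0 < x₀)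
    (hstep : PotterStep F x₀ lam β) (hu : 0 < u)
    (ha : Tendsto a atTop atTop) (hna : Tendsto (fun n => n / a n) atTop (𝓝 0))
    (hnF : Tendsto (fun n => n * F (u * a n)) atTop (𝓝 L)) (hK : 0 ≤ K) (hP0 : ∀ n, 0 ≤ P n)
    (hP : ∀ n, P n ≤ K * (n / a n * ∫ s in 0..u * a n, F s)) :
    limsup P atTop ≤ K * (lam ^ β / (1 - β) * (u * L)) := by
  set B : ℕ → ℝ := fun n =>
    K * (x₀ * F 0 * (n / a n) + lam ^ β / (1 - β) * (u * (n * F (u * a n))))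
  have hB : Tendsto B atTop (𝓝 (K * (lam ^ β / (1 - β) * (u * L)))) := by
    simpa using ((hna.const_mul (x₀ * F 0)).add ((hnF.const_mul u).const_mul _)).const_mul K
  have hPB : ∀ᶠ n in atTop, P n ≤ B n := by
    filter_upwards [(ha.const_mul_atTop hu).eventually_ge_atTop x₀, ha.eventually_gt_atTop 0]
      with n hn hapos
    refine (hP n).trans (mul_le_mul_of_nonneg_left ?_ hK)
    calc n / a n * ∫ s in 0..u * a n, F s
        ≤ n / a n * (x₀ * F 0 + lam ^ β / (1 - β) * (u * a n * F (u * a n))) := by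
          gcongr
          exact hF.intervalIntegral_le_of_potterStep hF0 hlam hβ0 hβ1 hx₀ hstep hn
      _ = x₀ * F 0 * (n / a n) + lam ^ β / (1 - β) * (u * (n * F (u * a n))) := by
          field_simp
  calc limsup P atTop ≤ limsup B atTop :=
        limsup_le_limsup hPB (isCoboundedUnder_le_of_le atTop hP0) hB.isBoundedUnder_le
    _ = K * (lam ^ β / (1 - β) * (u * L)) := hB.limsup_eq

lemma limsup_le_of_regularVariation {P a : ℕ → ℝ} {K u ε : ℝ} (hF : Antitone F)
    (hF0 : ∀ x, 0 ≤ F x) (hFpos : ∀ x, 0 < x → 0 < F x)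
    (hrv : ∀ l : ℝ, 0 < l → Tendsto (fun x => F (l * x) / F x) atTop (𝓝 (l ^ (-α))))
    (hα : 0 ≤ α) (hε : 0 < ε) (hαε : α + ε < 1) (hu : 0 < u) (hapos : ∀ n, 0 < a n)
    (han : Tendsto (fun n : ℕ => n * F (a n)) atTop (𝓝 1)) (hK : 0 ≤ K) (hP0 : ∀ n, 0 ≤ P n)
    (hP : ∀ n, P n ≤ K * (n / a n * ∫ s in 0..u * a n, F s)) :
    limsup P atTop ≤ K * ((1 + ε) ^ (α + ε) / (1 - (α + ε)) * (u * u ^ (-α))) := by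
  obtain ⟨x₀, hx₀, hstep⟩ := exists_potterStep_of_tendsto_div hFpos hrv
    (lam := 1 + ε) (β := α + ε) (by linarith) (by linarith)
  have hlam : 1 < 1 + ε := by linarith
  have hβ0 : 0 ≤ α + ε := by linarith
  have ha := hF.tendsto_atTop_of_tendsto_natCast_mul hFpos han
  have hFa_ne : ∀ n, F (a n) ≠ 0 := fun n => (hFpos _ (hapos n)).ne'
  have hna : Tendsto (fun n : ℕ => n / a n) atTop (𝓝 0) := by
    refine (han.div_atTop ((hF.tendsto_mul_self_atTop_of_potterStep hF0 (hFpos x₀ hx₀)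
      hlam hβ0 hαε hx₀ hstep).comp ha)).congr fun n => ?_
    simp only [Function.comp_apply]
    field_simp [hFa_ne n]
  have hnFu : Tendsto (fun n : ℕ => n * F (u * a n)) atTop (𝓝 (u ^ (-α))) := by
    refine (one_mul (u ^ (-α)) ▸ han.mul ((hrv u hu).comp ha)).congr fun n => ?_
    simp only [Function.comp_apply]
    field_simp [hFa_ne n]
  exact limsup_le_of_potterStep hF hF0 hlam hβ0 hαε hx₀ hstep hu ha hna hnFu hK hP0 hP

end RegularVariation

/-- Quantitative bound on the maximal deviation of centered small-jump partial sums: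
for identically distributed random vectors whose norm has a regularly varying tail of
index `-α`, `α ∈ (0,1)`, the probability `I(u,n)` satisfies
`limsup_n I(u,n) ≤ 2d δ⁻¹ u^{1-α} (1 + α/(1-α))`. -/
theorem limsup_small_jumps_bound
    {Ω : Type*} [MeasurableSpace Ω] (ℙ : Measure Ω) [IsProbabilityMeasure ℙ]
    {d : ℕ} (X : ℕ → Ω → EuclideanSpace ℝ (Fin d))
    (hmeas : ∀ i, Measurable (X i))
    (hident : ∀ i, 1 ≤ i → Measure.map (X i) ℙ = Measure.map (X 1) ℙ)
    (α : ℝ) (hα : 0 < α) (hα1 : α < 1)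
    (hpos : ∀ x : ℝ, 0 < x → 0 < ℙ {ω | ‖X 1 ω‖ > x})
    (hrv : ∀ l : ℝ, 0 < l →
      Tendsto (fun x : ℝ => (ℙ {ω | ‖X 1 ω‖ > l * x}).toReal / (ℙ {ω | ‖X 1 ω‖ > x}).toReal)
        atTop (nhds (l ^ (-α))))
    (a : ℕ → ℝ) (hapos : ∀ n, 0 < a n)
    (han : Tendsto (fun n : ℕ => (n : ℝ) * (ℙ {ω | ‖X 1 ω‖ > a n}).toReal) atTop (nhds 1))
    (u δ : ℝ) (hu : 0 < u) (hδ : 0 < δ) :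
    Filter.limsup
      (fun n : ℕ =>
        (ℙ {ω | ∃ k, 1 ≤ k ∧ k ≤ n ∧
          δ < ‖(WithLp.equiv 2 (Fin d → ℝ)).symm (fun j =>
            ∑ i ∈ Finset.Icc 1 k,
              ((if |X i ω j| ≤ u * a n then X i ω j / a n else 0)
                - ∫ ω', (if |X 1 ω' j| ≤ u * a n then X 1 ω' j / a n else 0) ∂ℙ))‖}).toReal)
      atTop
      ≤ 2 * d * δ⁻¹ * u ^ (1 - α) * (1 + α / (1 - α)) := by
  set F : ℝ → ℝ := fun s => (ℙ {ω | ‖X 1 ω‖ > s}).toReal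
  have hF : Antitone F := fun s t hst => measureReal_mono fun ω hω => hst.trans_lt hω
  have hF0 : ∀ x, 0 ≤ F x := fun x => ENNReal.toReal_nonneg
  have hFpos : ∀ x, 0 < x → 0 < F x := fun x hx =>
    ENNReal.toReal_pos (hpos x hx).ne' (measure_ne_top _ _)
  have hcont : ContinuousAt (fun ε : ℝ =>
      2 * d / δ * ((1 + ε) ^ (α + ε) / (1 - (α + ε)) * (u * u ^ (-α)))) 0 := by
    have hpow : ContinuousAt (fun ε : ℝ => (1 + ε) ^ (α + ε)) 0 :=
      (continuousAt_const.add continuousAt_id).rpow (continuousAt_const.add continuousAt_id)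
        (by norm_num)
    fun_prop (disch := norm_num; linarith)
  refine (ge_of_tendsto (hcont.tendsto.mono_left (nhdsWithin_le_nhds (s := Ioi 0))) ?_).trans_eq ?_
  · filter_upwards [Ioo_mem_nhdsGT (by linarith : (0 : ℝ) < 1 - α)] with ε ⟨hε0, hε1⟩
    refine limsup_le_of_regularVariation hF hF0 hFpos hrv hα.le hε0 (by linarith) hu hapos han
      (by positivity) (fun n => ENNReal.toReal_nonneg) fun n => ?_
    have := measureReal_exists_norm_partialSum_truncScaled_gt_le X hmeas hident
      (mul_pos hu (hapos n)).le (hapos n) hδ n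
    rwa [Fintype.card_fin] at this
  · have hu1 : u ^ (1 - α) = u * u ^ (-α) := by
      rw [sub_eq_add_neg, Real.rpow_add hu, Real.rpow_one]
    have : 1 - α ≠ 0 := by linarith
    simp only [add_zero, Real.one_rpow, hu1]
    field_simp
    ring
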